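/- arXiv:1302.4668 — 6 statements merged into one kernel-verified Lean document; each statement's English description precedes it below -/
import Mathlib

section
/- The probabilities p_{(3,n)} = (6/3^n)·∑_{m=7}^{n} ((m−4)^2 − 2)·C(n−2, m−2) form a probability distribution on the integers n ≥ 7; that is, ∑_{n=7}^{∞} (6/3^n)·∑_{m=7}^{n} ((m−4)^2 − 2)·C(n−2, m−2) = 1. -/
/-!
Substitute `j = n - 2`, `k = m - 2` and swap the two summations, which is legitimate because all
terms are nonnegative. The negative binomial series `∑ⱼ C(j, k) xʲ = xᵏ / (1 - x)ᵏ⁺¹` at `x = 1/3`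
turns the sum over `j` into `((k - 2)² - 2) / 2ᵏ`. Writing `(k - 2)² - 2 = 2 C(k,2) - 3 C(k,1) + 2`,
the same series at `x = 1/2` gives `∑_{k ≥ 0} ((k - 2)² - 2) / 2ᵏ = 2`, and the terms `k < 5`
contribute exactly `1`.
-/

open Finset

theorem hasSum_choose_mul_geometric {𝕜 : Type*} [NormedField 𝕜] [CompleteSpace 𝕜] (k : ℕ) {r : 𝕜}
    (hr : ‖r‖ < 1) : HasSum (fun n ↦ (n.choose k : 𝕜) * r ^ n) (r ^ k / (1 - r) ^ (k + 1)) := by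
  rw [← hasSum_nat_add_iff' k, sum_eq_zero fun i hi ↦ by
    rw [Nat.choose_eq_zero_of_lt (mem_range.mp hi), Nat.cast_zero, zero_mul], sub_zero,
    div_eq_mul_one_div]
  exact ((hasSum_choose_mul_geometric_of_norm_lt_one k hr).mul_left (r ^ k)).congr_fun
    fun n ↦ by rw [pow_add]; ring

theorem HasSum.fiberwise_comm_of_nonneg {β γ : Type*} {f : β × γ → ℝ} (hf : 0 ≤ f)
    {r : β → ℝ} {c : γ → ℝ} {a : ℝ} (hr : ∀ b, HasSum (fun x ↦ f (b, x)) (r b))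
    (hc : ∀ x, HasSum (fun b ↦ f (b, x)) (c x)) (h : HasSum r a) : HasSum c a := by
  have hsum : Summable f := (summable_prod_of_nonneg hf).mpr
    ⟨fun b ↦ (hr b).summable, by simpa only [(hr _).tsum_eq] using h.summable⟩
  have htotal : ∑' p, f p = a := (hsum.hasSum.prod_fiberwise hr).unique h
  rw [← htotal, ← (Equiv.prodComm γ β).tsum_eq]
  exact hsum.prod_symm.hasSum.prod_fiberwise hc

theorem hasSum_sub_two_sq_sub_two_mul_half_pow :
    HasSum (fun k : ℕ ↦ (((k : ℝ) - 2) ^ 2 - 2) * (1 / 2) ^ k) 2 := by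
  have hchoose : ∀ i, HasSum (fun k : ℕ ↦ (k.choose i : ℝ) * (1 / 2) ^ k) 2 := fun i ↦ by
    have := hasSum_choose_mul_geometric i (r := (1 / 2 : ℝ)) (by norm_num)
    rwa [pow_succ, show (1 : ℝ) - 1 / 2 = 1 / 2 by norm_num, div_mul_eq_div_div,
      div_self (by positivity), one_div_one_div] at this
  have := ((hchoose 2).mul_left 2).sub ((hchoose 1).mul_left 3) |>.add ((hchoose 0).mul_left 2)
  norm_num at this
  refine this.congr_fun fun k ↦ ?_
  rw [Nat.cast_choose_two]
  ring

theorem hasSum_sub_two_sq_sub_two_mul_half_pow_of_five_le :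
    HasSum (fun k : ℕ ↦ if 5 ≤ k then (((k : ℝ) - 2) ^ 2 - 2) * (1 / 2) ^ k else 0) 1 := by
  rw [← hasSum_nat_add_iff' 5]
  have := (hasSum_nat_add_iff' 5).mpr hasSum_sub_two_sq_sub_two_mul_half_pow
  norm_num [sum_range_succ] at this ⊢
  exact this

noncomputable def superpatternWaitingProb (n : ℕ) : ℝ :=
  if 7 ≤ n then
    (6 / 3 ^ n : ℝ) *
      ∑ m ∈ Finset.Icc 7 n, (((m : ℝ) - 4) ^ 2 - 2) * (Nat.choose (n - 2) (m - 2) : ℝ)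
  else 0

theorem superpatternWaitingProb_add_two (j : ℕ) :
    superpatternWaitingProb (j + 2) =
      2 / 3 * (1 / 3) ^ j * ∑ k ∈ Icc 5 j, (((k : ℝ) - 2) ^ 2 - 2) * j.choose k := by
  unfold superpatternWaitingProb
  split_ifs with hj
  · rw [← map_add_right_Icc 5 j 2, sum_map]
    have hcoeff : (6 : ℝ) / 3 ^ (j + 2) = 2 / 3 * (1 / 3) ^ j := by
      rw [pow_add, one_div_pow]; field_simp; norm_num
    simp only [hcoeff, addRightEmbedding_apply, Nat.add_sub_cancel, Nat.cast_add, Nat.cast_ofNat]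
    ring_nf
  · rw [Icc_eq_empty (by omega), sum_empty, mul_zero]

/-- The summand of `superpatternWaitingProb (j + 2)` indexed by `k = m - 2`. -/
noncomputable def superpatternWaitingSummand (k j : ℕ) : ℝ :=
  if 5 ≤ k then 2 / 3 * (1 / 3) ^ j * ((((k : ℝ) - 2) ^ 2 - 2) * j.choose k) else 0

theorem superpatternWaitingSummand_nonneg (k j : ℕ) : 0 ≤ superpatternWaitingSummand k j := by
  unfold superpatternWaitingSummand
  split_ifs with hk
  · have h3 : (3 : ℝ) ≤ k - 2 := by
      rw [le_sub_iff_add_le]; exact_mod_cast hk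
    have : (0 : ℝ) ≤ (k - 2) ^ 2 - 2 := by nlinarith
    positivity
  · exact le_rfl

theorem hasSum_superpatternWaitingSummand_left (k : ℕ) :
    HasSum (superpatternWaitingSummand k)
      (if 5 ≤ k then (((k : ℝ) - 2) ^ 2 - 2) * (1 / 2) ^ k else 0) := by
  unfold superpatternWaitingSummand
  split_ifs
  · have := (hasSum_choose_mul_geometric k (r := (1 / 3 : ℝ)) (by norm_num)).mul_left
      (2 / 3 * (((k : ℝ) - 2) ^ 2 - 2))
    rw [show (1 : ℝ) - 1 / 3 = 2 / 3 by norm_num, pow_succ (2 / 3 : ℝ), ← div_div, ← div_pow,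
      show (1 / 3 : ℝ) / (2 / 3) = 1 / 2 by norm_num] at this
    rw [show (((k : ℝ) - 2) ^ 2 - 2) * (1 / 2) ^ k
        = 2 / 3 * (((k : ℝ) - 2) ^ 2 - 2) * ((1 / 2) ^ k / (2 / 3)) by field_simp]
    exact this.congr_fun fun j ↦ by ring
  · exact hasSum_zero

theorem hasSum_superpatternWaitingSummand_right (j : ℕ) :
    HasSum (fun k ↦ superpatternWaitingSummand k j) (superpatternWaitingProb (j + 2)) := by
  rw [superpatternWaitingProb_add_two, mul_sum,
    sum_congr rfl fun k hk ↦ (if_pos (mem_Icc.1 hk).1).symm]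
  refine hasSum_sum_of_ne_finset_zero fun k hk ↦ ?_
  unfold superpatternWaitingSummand
  split_ifs
  · rw [Nat.choose_eq_zero_of_lt (by rw [mem_Icc] at hk; omega), Nat.cast_zero, mul_zero, mul_zero]
  · rfl

theorem hasSum_superpatternWaitingProb : HasSum superpatternWaitingProb 1 := by
  have hlow : ∑ i ∈ range 2, superpatternWaitingProb i = 0 := by
    simp [superpatternWaitingProb, sum_range_succ]
  rw [← hasSum_nat_add_iff' 2, hlow, sub_zero]
  exact HasSum.fiberwise_comm_of_nonneg (f := fun p ↦ superpatternWaitingSummand p.1 p.2)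
    (fun p ↦ superpatternWaitingSummand_nonneg p.1 p.2) hasSum_superpatternWaitingSummand_left
    hasSum_superpatternWaitingSummand_right hasSum_sub_two_sq_sub_two_mul_half_pow_of_five_le

/-- The waiting-time probabilities `p_{(3,n)} = (6/3^n)·∑_{m=7}^n ((m-4)²-2)·C(n-2,m-2)`
for `n ≥ 7` sum to 1, i.e. they form a probability distribution on the integers `n ≥ 7`. -/
theorem superpattern_waiting_time_distribution :
    ∑' n : ℕ,
      (if 7 ≤ n then
        (6 / 3 ^ n : ℝ) *
          ∑ m ∈ Finset.Icc 7 n, (((m : ℝ) - 4) ^ 2 - 2) * (Nat.choose (n - 2) (m - 2) : ℝ)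
      else 0) = 1 :=
  hasSum_superpatternWaitingProb.tsum_eq
end

section
/- The minimum length of a superpattern for [3]^3 is 7: there exists a word of length 7 over the alphabet {1,2,3} that is a superpattern for [3]^3 (for example 1213121), and no word of length at most 6 over {1,2,3} is a superpattern for [3]^3. -/
/-- A word `w` of length `n` over the alphabet `{1,…,d}` (modeled as `Fin d`)
contains the pattern `p` of length `k` if some subsequence of `w` is
order-isomorphic to `p`. -/
def Contains {n k d : ℕ} (w : Fin n → Fin d) (p : Fin k → Fin d) : Prop :=
  ∃ f : Fin k → Fin n, StrictMono f ∧ ∀ a b : Fin k, w (f a) ≤ w (f b) ↔ p a ≤ p b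

/-- A word over a ternary alphabet is a superpattern for `[3]^3` if it contains
every pattern of length 3 over the ternary alphabet. -/
def Superpattern3 {n : ℕ} (w : Fin n → Fin 3) : Prop :=
  ∀ p : Fin 3 → Fin 3, Contains w p

/-!
A superpattern contains `111`, so some letter occurs three times, and `123`, so every letter
occurs. If every letter occurs at least twice the length is at least `3 + 2 + 2`. Otherwise some
letter `v` occurs exactly once, at position `m`; since the alphabet has three letters, a
permutation pattern can only occur literally, so the patterns `vst`, `vts` put both `st` and `ts`
after `m`, and `stv`, `tsv` put both before `m`. Each side then needs three positions, so the
length is at least `3 + 1 + 3`.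
-/

open Finset

theorem three_le_card_of_both_orders {α ι : Type*} [LinearOrder ι] {w : ι → α} {s t : α}
    (hst : s ≠ t) {S : Finset ι} {i j i' j' : ι} (hi : i ∈ S) (hj : j ∈ S) (hi' : i' ∈ S)
    (hj' : j' ∈ S) (hij : i < j) (hij' : i' < j') (hwi : w i = s) (hwj : w j = t)
    (hwi' : w i' = t) (hwj' : w j' = s) : 3 ≤ #S := by
  have hne : ∀ {x y}, w x = s → w y = t → x ≠ y := fun hx hy hxy =>
    hst (hx ▸ hy ▸ hxy ▸ rfl)
  refine two_lt_card_iff.2 ?_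
  by_cases h : i = j'
  · subst h
    exact ⟨i, j, i', hi, hj, hi', hne hwi hwj, hne hwi hwi', fun h => lt_asymm hij (h ▸ hij')⟩
  · exact ⟨i, j, j', hi, hj, hj', hne hwi hwj, h, (hne hwj' hwj).symm⟩

theorem contains_iff_exists_lt_lt {n d : ℕ} (w : Fin n → Fin d) (p : Fin 3 → Fin d) :
    Contains w p ↔ ∃ i j k : Fin n, i < j ∧ j < k ∧
      ∀ a b : Fin 3, w (![i, j, k] a) ≤ w (![i, j, k] b) ↔ p a ≤ p b := by
  constructor
  · rintro ⟨f, hf, hfp⟩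
    have hf_eq : ![f 0, f 1, f 2] = f := by ext a; fin_cases a <;> rfl
    exact ⟨f 0, f 1, f 2, hf (by decide), hf (by decide), hf_eq ▸ hfp⟩
  · rintro ⟨i, j, k, hij, hjk, hp⟩
    refine ⟨![i, j, k], Fin.strictMono_iff_lt_succ.2 fun a => ?_, hp⟩
    fin_cases a
    exacts [hij, hjk]

theorem Contains.exists_eq_of_injective {n k : ℕ} {w : Fin n → Fin k} {p : Fin k → Fin k}
    (h : Contains w p) (hp : Function.Injective p) : ∃ f, StrictMono f ∧ w ∘ f = p := by
  obtain ⟨f, hf, hfp⟩ := h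
  let e := Equiv.ofBijective p (Finite.injective_iff_bijective.1 hp)
  have hmono : StrictMono (w ∘ f ∘ e.symm) := fun x y hxy => by
    simp only [Function.comp_apply, lt_iff_not_ge, hfp]
    simpa [e, Equiv.ofBijective_apply_symm_apply] using hxy
  refine ⟨f, hf, funext fun a => ?_⟩
  simpa [e] using congrFun hmono.eq_id (p a)

theorem Contains.exists_lt_lt_of_ne {n : ℕ} {w : Fin n → Fin 3} {a b c : Fin 3}
    (h : Contains w ![a, b, c]) (hab : a ≠ b) (hac : a ≠ c) (hbc : b ≠ c) :
    ∃ i j k, i < j ∧ j < k ∧ w i = a ∧ w j = b ∧ w k = c := by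
  have hinj : Function.Injective ![a, b, c] := by
    simp [Function.Injective, Fin.forall_fin_succ, hab, hac, hbc, hab.symm, hac.symm, hbc.symm]
  obtain ⟨f, hf, hfp⟩ := h.exists_eq_of_injective hinj
  exact ⟨f 0, f 1, f 2, hf (by decide), hf (by decide), congrFun hfp 0, congrFun hfp 1,
    congrFun hfp 2⟩

namespace Superpattern3

variable {n : ℕ} {w : Fin n → Fin 3}

theorem exists_three_le_card_fiber (h : Superpattern3 w) : ∃ v, 3 ≤ #{i | w i = v} := by
  obtain ⟨f, hf, hfp⟩ := h fun _ => 0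
  have heq : ∀ a b, w (f a) = w (f b) := fun a b =>
    le_antisymm ((hfp a b).2 le_rfl) ((hfp b a).2 le_rfl)
  exact ⟨w (f 0), two_lt_card_iff.2 ⟨f 0, f 1, f 2, by simp, by simp [heq 1 0],
    by simp [heq 2 0], hf.injective.ne (by decide), hf.injective.ne (by decide),
    hf.injective.ne (by decide)⟩⟩

theorem card_fiber_pos (h : Superpattern3 w) (v : Fin 3) : 0 < #{i | w i = v} := by
  obtain ⟨i, j, k, -, -, hi, hj, hk⟩ :=
    (h ![0, 1, 2]).exists_lt_lt_of_ne (by decide) (by decide) (by decide)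
  refine card_pos.2 ?_
  fin_cases v
  exacts [⟨i, by simpa⟩, ⟨j, by simpa⟩, ⟨k, by simpa⟩]

theorem seven_le_of_card_fiber_eq_one (h : Superpattern3 w) {v : Fin 3}
    (hv : #{i | w i = v} = 1) : 7 ≤ n := by
  obtain ⟨m, hm⟩ := card_eq_one.1 hv
  have hwm : ∀ i, w i = v → i = m := fun i hi => by
    simpa [hm] using (mem_filter.2 ⟨mem_univ i, hi⟩ : i ∈ ({i | w i = v} : Finset _))
  obtain ⟨s, t, hst, hvs, hvt⟩ :=
    (by decide : ∀ v : Fin 3, ∃ s t : Fin 3, s ≠ t ∧ v ≠ s ∧ v ≠ t) v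
  have hafter : 3 ≤ #(Ioi m) := by
    obtain ⟨i, j, k, hij, hjk, hi, hj, hk⟩ := (h ![v, s, t]).exists_lt_lt_of_ne hvs hvt hst
    obtain ⟨i', j', k', hij', hjk', hi', hj', hk'⟩ :=
      (h ![v, t, s]).exists_lt_lt_of_ne hvt hvs hst.symm
    rw [hwm i hi] at hij
    rw [hwm i' hi'] at hij'
    exact three_le_card_of_both_orders hst (mem_Ioi.2 hij) (mem_Ioi.2 (hij.trans hjk))
      (mem_Ioi.2 hij') (mem_Ioi.2 (hij'.trans hjk')) hjk hjk' hj hk hj' hk'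
  have hbefore : 3 ≤ #(Iio m) := by
    obtain ⟨i, j, k, hij, hjk, hi, hj, hk⟩ :=
      (h ![s, t, v]).exists_lt_lt_of_ne hst hvs.symm hvt.symm
    obtain ⟨i', j', k', hij', hjk', hi', hj', hk'⟩ :=
      (h ![t, s, v]).exists_lt_lt_of_ne hst.symm hvt.symm hvs.symm
    rw [hwm k hk] at hjk
    rw [hwm k' hk'] at hjk'
    exact three_le_card_of_both_orders hst (mem_Iio.2 (hij.trans hjk)) (mem_Iio.2 hjk)
      (mem_Iio.2 (hij'.trans hjk')) (mem_Iio.2 hjk') hij hij' hi hj hi' hj'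
  rw [Fin.card_Ioi] at hafter
  rw [Fin.card_Iio] at hbefore
  omega

theorem seven_le (h : Superpattern3 w) : 7 ≤ n := by
  by_cases hone : ∃ v, #{i | w i = v} = 1
  · obtain ⟨v, hv⟩ := hone
    exact h.seven_le_of_card_fiber_eq_one hv
  simp only [not_exists] at hone
  have hsum : ∑ v, #{i | w i = v} = n := by
    simpa using (card_eq_sum_card_fiberwise (s := univ) (t := univ) (f := w) (by simp)).symm
  rw [Fin.sum_univ_three] at hsum
  have hpos := h.card_fiber_pos
  obtain ⟨v, hv⟩ := h.exists_three_le_card_fiber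
  have := hpos 0; have := hpos 1; have := hpos 2
  have := hone 0; have := hone 1; have := hone 2
  fin_cases v <;> simp at hv <;> omega

end Superpattern3

theorem superpattern3_0102010 : Superpattern3 ![0, 1, 0, 2, 0, 1, 0] := by
  intro p
  rw [contains_iff_exists_lt_lt]
  revert p
  decide

/-- The minimum length of a superpattern for `[3]^3` is 7: the word `1213121`
(encoded with letters `0,1,2`) is a superpattern of length 7, and no word of
length at most 6 is a superpattern. -/
theorem minimum_superpattern_length_seven :
    Superpattern3 ![0, 1, 0, 2, 0, 1, 0] ∧
    ∀ n : ℕ, n ≤ 6 → ∀ w : Fin n → Fin 3, ¬ Superpattern3 w :=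
  ⟨superpattern3_0102010, fun _ hn _ hw => absurd hw.seven_le (by omega)⟩
end

section
/- The expected waiting time until an i.i.d. uniform ternary sequence becomes a superpattern for [3]^3 equals 217/16 = 13.5625; that is, ∑_{n=7}^{∞} n·(6/3^n)·∑_{m=7}^{n} ((m−4)^2 − 2)·C(n−2, m−2) = 217/16. -/
/-!
With `N = n - 2`, the inner sum is the binomial sum `∑_j ((j - 2)² - 2) C(N, j)` with its
terms `j < 5` removed, so by the moments `∑ jᵏ C(N, j)`, `k ≤ 2`, it equals
`2^N (N² - 7N + 8) / 4` minus a quartic in `N`. Hence `n · P(τ = n)` is a combination of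
`nᵏ (2/3)ⁿ` and `nᵏ (1/3)ⁿ`, and it telescopes against an explicit `G` of the same shape with
`G n → 0`; the expectation is `G 7 = 217/16`.
-/

open Finset Filter Topology Polynomial

theorem hasSum_of_eq_sub_succ_of_nonneg {f g : ℕ → ℝ} (hf : ∀ n, 0 ≤ f n)
    (hfg : ∀ n, f n = g n - g (n + 1)) (hg : Tendsto g atTop (𝓝 0)) : HasSum f (g 0) := by
  rw [hasSum_iff_tendsto_nat_of_nonneg hf]
  have hpartial : ∀ n, ∑ i ∈ range n, f i = g 0 - g n := fun n => by
    rw [← sum_range_sub' g n]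
    exact sum_congr rfl fun i _ => hfg i
  simpa [hpartial] using tendsto_const_nhds (x := g 0) |>.sub hg

theorem tendsto_eval_mul_pow_of_abs_lt_one (p : ℝ[X]) {r : ℝ} (hr : |r| < 1) :
    Tendsto (fun n : ℕ => p.eval (n : ℝ) * r ^ n) atTop (𝓝 0) := by
  induction p using Polynomial.induction_on' with
  | add p q hp hq => simpa [add_mul] using hp.add hq
  | monomial k a =>
    simpa [mul_assoc] using (tendsto_pow_const_mul_const_pow_of_abs_lt_one k hr).const_mul a

namespace Nat

theorem two_mul_sum_range_mul_choose (n : ℕ) :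
    2 * ∑ i ∈ range (n + 1), i * n.choose i = n * 2 ^ n := by
  rw [sum_range_mul_choose]
  cases n <;> simp [pow_succ]; ring

theorem four_mul_sum_range_sq_mul_choose (n : ℕ) :
    4 * ∑ i ∈ range (n + 1), i ^ 2 * n.choose i = n * (n + 1) * 2 ^ n := by
  cases n with
  | zero => simp
  | succ m =>
    have hterm : ∀ i ∈ range (m + 1), (i + 1) ^ 2 * (m + 1).choose (i + 1)
        = (m + 1) * (i * m.choose i + m.choose i) := fun i _ => by
      rw [sq, mul_assoc, mul_comm (i + 1) (choose _ _), ← add_one_mul_choose_eq]; ring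
    rw [sum_range_succ', sum_congr rfl hterm, ← mul_sum, sum_add_distrib, sum_range_choose]
    have := two_mul_sum_range_mul_choose m
    simp only [choose_zero_right, zero_pow two_ne_zero, zero_mul, add_zero, pow_succ]
    nlinarith [this]

end Nat

theorem four_mul_sum_range_quadratic_mul_choose (N : ℕ) :
    4 * ∑ j ∈ range (N + 1), (((j : ℝ) - 2) ^ 2 - 2) * N.choose j
      = 2 ^ N * ((N : ℝ) ^ 2 - 7 * N + 8) := by
  have h0 : ∑ j ∈ range (N + 1), (N.choose j : ℝ) = 2 ^ N := by
    exact_mod_cast Nat.sum_range_choose N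
  have h1 : 2 * ∑ j ∈ range (N + 1), (j : ℝ) * N.choose j = N * 2 ^ N := by
    exact_mod_cast Nat.two_mul_sum_range_mul_choose N
  have h2 : 4 * ∑ j ∈ range (N + 1), (j : ℝ) ^ 2 * N.choose j = N * (N + 1) * 2 ^ N := by
    exact_mod_cast Nat.four_mul_sum_range_sq_mul_choose N
  have hsplit : ∑ j ∈ range (N + 1), (((j : ℝ) - 2) ^ 2 - 2) * N.choose j
      = ∑ j ∈ range (N + 1), (j : ℝ) ^ 2 * N.choose j
        - 4 * ∑ j ∈ range (N + 1), (j : ℝ) * N.choose j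
        + 2 * ∑ j ∈ range (N + 1), (N.choose j : ℝ) := by
    simp only [mul_sum, ← sum_sub_distrib, ← sum_add_distrib]
    exact sum_congr rfl fun j _ => by ring
  rw [hsplit]
  linear_combination h2 - 8 * h1 + 8 * h0

theorem twelve_mul_sum_Icc_choose (N : ℕ) (hN : 4 ≤ N) :
    12 * ∑ m ∈ Icc 7 (N + 2), (((m : ℝ) - 4) ^ 2 - 2) * N.choose (m - 2)
      = 3 * 2 ^ N * ((N : ℝ) ^ 2 - 7 * N + 8)
        - ((N : ℝ) ^ 4 - 8 * N ^ 3 + 5 * N ^ 2 - 10 * N + 24) := by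
  have hshift : ∑ m ∈ Icc 7 (N + 2), (((m : ℝ) - 4) ^ 2 - 2) * N.choose (m - 2)
      = ∑ j ∈ Ico 5 (N + 1), (((j : ℝ) - 2) ^ 2 - 2) * N.choose j := by
    rw [← Ico_add_one_right_eq_Icc, show N + 2 + 1 = N + 1 + 2 by omega, show 7 = 5 + 2 from rfl,
      ← map_add_right_Ico, sum_map]
    refine sum_congr rfl fun j _ => ?_
    simp only [addRightEmbedding_apply, Nat.add_sub_cancel]
    push_cast; ring
  have hhead : ∑ j ∈ range 5, (((j : ℝ) - 2) ^ 2 - 2) * N.choose j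
      = 2 - N - (N : ℝ) * (N - 1) - N * (N - 1) * (N - 2) / 6
        + N * (N - 1) * (N - 2) * (N - 3) / 12 := by
    simp [sum_range_succ, Nat.cast_choose_eq_descPochhammer_div, descPochhammer_succ_eval,
      Nat.factorial]
    ring
  rw [hshift, sum_Ico_eq_sub _ (by omega : 5 ≤ N + 1), hhead]
  linear_combination 3 * four_mul_sum_range_quadratic_mul_choose N

/-- `P(τ = n)`: the number of length-`n` words that first become superpatterns at time `n`,
divided by `3 ^ n`. -/
noncomputable def firstHitProb (n : ℕ) : ℝ :=
  6 / 3 ^ n * ∑ m ∈ Icc 7 n, (((m : ℝ) - 4) ^ 2 - 2) * (n - 2).choose (m - 2)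

theorem firstHitProb_nonneg (n : ℕ) : 0 ≤ firstHitProb n := by
  refine mul_nonneg (by positivity) (sum_nonneg fun m hm => mul_nonneg ?_ (Nat.cast_nonneg _))
  have h7 : (7 : ℝ) ≤ m := by exact_mod_cast (mem_Icc.mp hm).1
  nlinarith

theorem firstHitProb_add_two (N : ℕ) (hN : 4 ≤ N) :
    firstHitProb (N + 2) = (3 * 2 ^ N * ((N : ℝ) ^ 2 - 7 * N + 8)
      - ((N : ℝ) ^ 4 - 8 * N ^ 3 + 5 * N ^ 2 - 10 * N + 24)) / (2 * 3 ^ (N + 2)) := by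
  rw [firstHitProb, Nat.add_sub_cancel, ← twelve_mul_sum_Icc_choose N hN]
  field_simp
  ring

/-- The `G` of the telescoping: for `n ≥ 7` it is `∑_{k ≥ n} k · P(τ = k)`. It was found by
solving `G n - G (n + 1) = n · P(τ = n)` with the ansatz `G n = (2 ^ n p(n) + q(n)) / 3 ^ n`. -/
noncomputable def expectationTail (n : ℕ) : ℝ :=
  (2 ^ n * (288 + 216 * (n : ℝ) - 90 * n ^ 2 + 18 * n ^ 3)
    + (-135 - 1092 * (n : ℝ) + 1332 * n ^ 2 - 660 * n ^ 3 + 162 * n ^ 4 - 12 * n ^ 5))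
    / (16 * 3 ^ n)

theorem expectationTail_sub_succ (N : ℕ) (hN : 4 ≤ N) :
    expectationTail (N + 2) - expectationTail (N + 3) = (N + 2 : ℕ) * firstHitProb (N + 2) := by
  rw [firstHitProb_add_two N hN, expectationTail, expectationTail]
  push_cast
  simp only [pow_add]
  field_simp
  ring

theorem tendsto_expectationTail : Tendsto expectationTail atTop (𝓝 0) := by
  have h23 : |(2 : ℝ) / 3| < 1 := by rw [abs_of_nonneg] <;> norm_num
  have h13 : |(1 : ℝ) / 3| < 1 := by rw [abs_of_nonneg] <;> norm_num
  have := ((tendsto_eval_mul_pow_of_abs_lt_one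
      (288 + 216 * X - 90 * X ^ 2 + 18 * X ^ 3) h23).add
    (tendsto_eval_mul_pow_of_abs_lt_one
      (-135 - 1092 * X + 1332 * X ^ 2 - 660 * X ^ 3 + 162 * X ^ 4 - 12 * X ^ 5) h13)).div_const 16
  rw [zero_add, zero_div] at this
  refine this.congr fun n => ?_
  simp only [expectationTail, eval_add, eval_sub, eval_mul, eval_pow, eval_X, eval_ofNat, eval_neg,
    div_pow, one_pow]
  field_simp

theorem hasSum_mul_firstHitProb :
    HasSum (fun k : ℕ => ((k + 7 : ℕ) : ℝ) * firstHitProb (k + 7)) (217 / 16) := by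
  have h7 : expectationTail 7 = 217 / 16 := by norm_num [expectationTail]
  rw [← h7]
  exact hasSum_of_eq_sub_succ_of_nonneg (g := fun k => expectationTail (k + 7))
    (fun k => mul_nonneg (Nat.cast_nonneg _) (firstHitProb_nonneg _))
    (fun k => (expectationTail_sub_succ (k + 5) (by omega)).symm)
    (tendsto_expectationTail.comp (tendsto_add_atTop_nat 7))

/-- The expected waiting time until an i.i.d. uniform ternary sequence becomes a
superpattern for `[3]^3` equals `217/16 = 13.5625`. -/
theorem superpattern_waiting_time_expectation :
    ∑' n : ℕ,
      (if 7 ≤ n then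
        (n : ℝ) * ((6 / 3 ^ n : ℝ) *
          ∑ m ∈ Finset.Icc 7 n, (((m : ℝ) - 4) ^ 2 - 2) * (Nat.choose (n - 2) (m - 2) : ℝ))
      else 0) = 217 / 16 := by
  refine ((hasSum_nat_add_iff' 7).mp ?_).tsum_eq
  rw [sum_eq_zero fun n hn => if_neg (by simpa using hn), sub_zero]
  simp only [le_add_iff_nonneg_left, zero_le, if_true]
  exact hasSum_mul_firstHitProb
end

section
/- For every real t with |t| < 3/2, the probability generating function of the ternary superpattern waiting time satisfies ∑_{n=7}^{∞} t^n·(6/3^n)·∑_{m=7}^{n} ((m−4)^2 − 2)·C(n−2, m−2) = 2t^7(16t^2 − 63t + 63) / ((3−t)^5 (3−2t)^3). -/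
/-! Put `N = n - 2` and `j = m - 2`, so that the inner sum is `∑_{5 ≤ j ≤ N} p(j) C(N, j)`
with `p(j) = (j - 2)² - 2 = 2 - 3 C(j, 1) + 2 C(j, 2)`.
Since `∑_j C(N, j) C(j, k) = C(N, k) 2^(N-k)`, the sum over all `0 ≤ j ≤ N` is
`2^N (2 - 3N/2 + C(N, 2)/2)`, while the five terms `j < 5` are a fixed combination of the
`C(N, k)`. The series is therefore a finite combination of the series
`∑_N C(N, k) r^N = r^k / (1 - r)^(k+1)` at `r = 2t/3` and `r = t/3`, both of which converge
for `|t| < 3/2`. -/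

open Finset

theorem Nat.sum_range_choose_mul_choose_mul_two_pow (N k : ℕ) :
    (∑ j ∈ range (N + 1), N.choose j * j.choose k) * 2 ^ k = N.choose k * 2 ^ N := by
  rcases lt_or_ge N k with hNk | hkN
  · have hzero : ∀ j ∈ range (N + 1), N.choose j * j.choose k = 0 := fun j hj => by
      rw [Nat.choose_eq_zero_of_lt (by grind : j < k), mul_zero]
    rw [sum_eq_zero hzero, Nat.choose_eq_zero_of_lt hNk, zero_mul, zero_mul]
  obtain ⟨M, rfl⟩ := Nat.exists_eq_add_of_le hkN
  have hlow : ∑ j ∈ range k, (k + M).choose j * j.choose k = 0 :=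
    sum_eq_zero fun j hj => by rw [Nat.choose_eq_zero_of_lt (mem_range.1 hj), mul_zero]
  rw [show k + M + 1 = k + (M + 1) by ring, sum_range_add, hlow, zero_add]
  simp_rw [Nat.choose_mul (Nat.le_add_right k _), Nat.add_sub_cancel_left, ← mul_sum,
    Nat.sum_range_choose, pow_add]
  ring

theorem hasSum_choose_mul_pow {𝕜 : Type*} [NormedField 𝕜] [HasSummableGeomSeries 𝕜]
    (k : ℕ) {r : 𝕜} (hr : ‖r‖ < 1) :
    HasSum (fun n => (n.choose k : 𝕜) * r ^ n) (r ^ k / (1 - r) ^ (k + 1)) := by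
  have hlow : ∑ n ∈ range k, (n.choose k : 𝕜) * r ^ n = 0 :=
    sum_eq_zero fun n hn => by
      rw [Nat.choose_eq_zero_of_lt (mem_range.1 hn), Nat.cast_zero, zero_mul]
  rw [← hasSum_nat_add_iff' k, hlow, sub_zero, div_eq_mul_one_div]
  exact ((hasSum_choose_mul_geometric_of_norm_lt_one k hr).mul_left (r ^ k)).congr_fun
    fun n => by ring

theorem hasSum_sum_choose_mul_pow {𝕜 : Type*} [NormedField 𝕜] [HasSummableGeomSeries 𝕜]
    (c : ℕ → 𝕜) (K : ℕ) {r : 𝕜} (hr : ‖r‖ < 1) :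
    HasSum (fun n => (∑ k ∈ range K, c k * n.choose k) * r ^ n)
      (∑ k ∈ range K, c k * (r ^ k / (1 - r) ^ (k + 1))) := by
  simpa only [sum_mul, mul_assoc] using
    hasSum_sum fun k _ => (hasSum_choose_mul_pow k hr).mul_left (c k)

theorem sum_Ico_mul_choose_eq_sub {R : Type*} [CommRing R] (f : ℕ → R) (a N : ℕ) :
    ∑ j ∈ Ico a (N + 1), f j * N.choose j
      = ∑ j ∈ range (N + 1), f j * N.choose j - ∑ j ∈ range a, f j * N.choose j := by
  rcases le_or_gt a (N + 1) with ha | ha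
  · exact sum_Ico_eq_sub _ ha
  · rw [Ico_eq_empty_of_le ha.le, sum_empty, eq_comm, sub_eq_zero]
    refine sum_subset (range_subset_range.2 ha.le) fun j _ hj => ?_
    rw [Nat.choose_eq_zero_of_lt (by simpa using hj), Nat.cast_zero, mul_zero]

theorem sum_range_sq_sub_two_mul_choose (N : ℕ) :
    ∑ j ∈ range (N + 1), (((j : ℝ) - 2) ^ 2 - 2) * N.choose j
      = (2 : ℝ) ^ N * (2 - 3 / 2 * (N : ℝ) + 1 / 2 * (N.choose 2 : ℝ)) := by
  have hmoment (k : ℕ) :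
      ∑ j ∈ range (N + 1), (N.choose j * j.choose k : ℝ) = N.choose k * 2 ^ N / 2 ^ k := by
    rw [eq_div_iff (by positivity)]
    exact_mod_cast Nat.sum_range_choose_mul_choose_mul_two_pow N k
  calc ∑ j ∈ range (N + 1), (((j : ℝ) - 2) ^ 2 - 2) * N.choose j
      = 2 * ∑ j ∈ range (N + 1), (N.choose j * j.choose 0 : ℝ)
        - 3 * ∑ j ∈ range (N + 1), (N.choose j * j.choose 1 : ℝ)
        + 2 * ∑ j ∈ range (N + 1), (N.choose j * j.choose 2 : ℝ) := by
        rw [mul_sum, mul_sum, mul_sum, ← sum_sub_distrib, ← sum_add_distrib]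
        refine sum_congr rfl fun j _ => ?_
        rw [Nat.cast_choose_two]
        simp only [Nat.choose_zero_right, Nat.choose_one_right, Nat.cast_one]
        ring
    _ = 2 ^ N * (2 - 3 / 2 * (N : ℝ) + 1 / 2 * (N.choose 2 : ℝ)) := by
        rw [hmoment, hmoment, hmoment]
        simp only [Nat.choose_zero_right, Nat.choose_one_right, Nat.cast_one]
        ring

theorem sum_Icc_seven_sq_sub_two_mul_choose (N : ℕ) :
    ∑ m ∈ Icc 7 (N + 2), (((m : ℝ) - 4) ^ 2 - 2) * (N.choose (m - 2) : ℝ)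
      = (2 : ℝ) ^ N * (2 - 3 / 2 * (N : ℝ) + 1 / 2 * (N.choose 2 : ℝ))
        - ∑ j ∈ range 5, (((j : ℝ) - 2) ^ 2 - 2) * N.choose j := by
  rw [← sum_range_sq_sub_two_mul_choose, ← sum_Ico_mul_choose_eq_sub,
    ← Ico_add_one_right_eq_Icc, show Ico 7 (N + 2 + 1) = Ico (5 + 2) (N + 1 + 2) from rfl,
    ← sum_Ico_add']
  refine sum_congr rfl fun j _ => ?_
  push_cast
  ring

/-- For `|t| < 3/2`, the probability generating function of the ternary
superpattern waiting time equals `2t⁷(16t² − 63t + 63)/((3−t)⁵(3−2t)³)`. -/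
theorem superpattern_waiting_time_generating_function (t : ℝ) (ht : |t| < 3 / 2) :
    ∑' n : ℕ,
      (if 7 ≤ n then
        t ^ n * ((6 / 3 ^ n : ℝ) *
          ∑ m ∈ Finset.Icc 7 n, (((m : ℝ) - 4) ^ 2 - 2) * (Nat.choose (n - 2) (m - 2) : ℝ))
      else 0) =
    2 * t ^ 7 * (16 * t ^ 2 - 63 * t + 63) / ((3 - t) ^ 5 * (3 - 2 * t) ^ 3) := by
  obtain ⟨ht₁, ht₂⟩ := abs_lt.1 ht
  have hx : ‖t / 3‖ < 1 := by rw [Real.norm_eq_abs, abs_lt]; constructor <;> linarith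
  have h2x : ‖2 * (t / 3)‖ < 1 := by rw [Real.norm_eq_abs, abs_lt]; constructor <;> linarith
  have hfull := (((hasSum_choose_mul_pow 0 h2x).mul_left 2).sub
    ((hasSum_choose_mul_pow 1 h2x).mul_left (3 / 2))).add
    ((hasSum_choose_mul_pow 2 h2x).mul_left (1 / 2))
  have hlow := hasSum_sum_choose_mul_pow (fun j => ((j : ℝ) - 2) ^ 2 - 2) 5 hx
  refine ((hasSum_nat_add_iff 2).1 (((hfull.sub hlow).mul_left (6 * (t / 3) ^ 2)).congr_fun
    fun N => ?_)).tsum_eq.trans ?_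
  · rw [ite_eq_left_iff.2 fun h => by simp [Icc_eq_empty_of_lt (not_le.1 h)],
      Nat.add_sub_cancel, sum_Icc_seven_sq_sub_two_mul_choose]
    simp only [Nat.choose_zero_right, Nat.choose_one_right, Nat.cast_one, mul_pow, div_pow]
    field_simp
    ring
  · have h3t : 3 - t ≠ 0 := by linarith
    -- `field_simp` normalizes the denominator `3 - 2 * t` to this form
    have h32t : 3 - t * 2 ≠ 0 := by linarith
    norm_num [sum_range_succ]
    field_simp
    ring
end

section
/- For every integer n ≥ 3, the number of binary words w of length n over the alphabet {1,2} such that w contains each of the patterns 11, 12, and 21 as a subsequence while the prefix of w of length n−1 does not contain all three of these patterns, equals 2(n−2). Consequently, for an i.i.d. uniform binary sequence, the waiting time τ until the observed word contains all preferential arrangements of length 2 satisfies P(τ = n) = (n−2)/2^{n−1}. -/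
/-- A binary word is a superpattern (for `k = d = 2`) if it contains every
pattern of length 2 over the binary alphabet; equivalently, it contains each of
the preferential arrangements `11`, `12`, and `21`. -/
def Superpattern2 {n : ℕ} (w : Fin n → Fin 2) : Prop :=
  ∀ p : Fin 2 → Fin 2, Contains w p

section Aux

variable {n : ℕ}

/-- An ascent pair. -/
def Asc (w : Fin n → Fin 2) : Prop := ∃ i j : Fin n, i < j ∧ w i < w j

/-- A descent pair. -/
def Desc (w : Fin n → Fin 2) : Prop := ∃ i j : Fin n, i < j ∧ w j < w i

lemma strictMono_pair {i j : Fin n} (h : i < j) : StrictMono ![i, j] := by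
  intro a b hab
  fin_cases a <;> fin_cases b <;> simp_all

lemma fin2_dich (c x : Fin 2) : x = c ∨ x = 1 - c := by revert c x; decide

lemma fin2_ne (c : Fin 2) : c ≠ 1 - c := by revert c; decide

lemma fin2_lt_or (c : Fin 2) : c < 1 - c ∨ 1 - c < c := by revert c; decide

lemma fin2_lt {x y : Fin 2} (h : x < y) : x = 0 ∧ y = 1 := by
  revert h; revert x y; decide

lemma asc_desc_eq {w : Fin n → Fin 2} (ha : Asc w) (hd : Desc w) :
    ∃ i j : Fin n, i < j ∧ w i = w j := by
  obtain ⟨i, j, hij, hij'⟩ := ha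
  obtain ⟨k, l, hkl, hkl'⟩ := hd
  obtain ⟨hi0, hj1⟩ := fin2_lt hij'
  obtain ⟨hl0, hk1⟩ := fin2_lt hkl'
  rcases eq_or_ne i l with rfl | hne
  · have hjk : j ≠ k := by
      rintro rfl; exact absurd (hkl.trans hij) (lt_irrefl _)
    rcases hjk.lt_or_gt with h | h
    · exact ⟨j, k, h, by rw [hj1, hk1]⟩
    · exact ⟨k, j, h, by rw [hj1, hk1]⟩
  · rcases hne.lt_or_gt with h | h
    · exact ⟨i, l, h, by rw [hi0, hl0]⟩
    · exact ⟨l, i, h, by rw [hi0, hl0]⟩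

lemma superpattern_iff (w : Fin n → Fin 2) : Superpattern2 w ↔ Asc w ∧ Desc w := by
  constructor
  · intro h
    constructor
    · obtain ⟨f, hf, hiff⟩ := h ![0, 1]
      refine ⟨f 0, f 1, hf (by decide : (0 : Fin 2) < 1), ?_⟩
      have := (hiff 1 0).not
      simp at this
      exact this
    · obtain ⟨f, hf, hiff⟩ := h ![1, 0]
      refine ⟨f 0, f 1, hf (by decide : (0 : Fin 2) < 1), ?_⟩
      have := (hiff 0 1).not
      simp at this
      exact this
  · rintro ⟨ha, hd⟩ p
    rcases lt_trichotomy (p 0) (p 1) with h | h | h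
    · obtain ⟨i, j, hij, hw⟩ := ha
      refine ⟨![i, j], strictMono_pair hij, ?_⟩
      intro a b
      fin_cases a <;> fin_cases b <;>
        simp only [Matrix.cons_val_zero, Matrix.cons_val_one, Matrix.head_cons] <;>
        first
          | exact iff_of_true le_rfl le_rfl
          | exact iff_of_true hw.le h.le
          | exact iff_of_false (not_le.mpr hw) (not_le.mpr h)
    · obtain ⟨i, j, hij, hw⟩ := asc_desc_eq ha hd
      refine ⟨![i, j], strictMono_pair hij, ?_⟩
      intro a b
      fin_cases a <;> fin_cases b <;>
        simp only [Matrix.cons_val_zero, Matrix.cons_val_one, Matrix.head_cons] <;>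
        first
          | exact iff_of_true le_rfl le_rfl
          | exact iff_of_true hw.le h.le
          | exact iff_of_true hw.ge h.ge
    · obtain ⟨i, j, hij, hw⟩ := hd
      refine ⟨![i, j], strictMono_pair hij, ?_⟩
      intro a b
      fin_cases a <;> fin_cases b <;>
        simp only [Matrix.cons_val_zero, Matrix.cons_val_one, Matrix.head_cons] <;>
        first
          | exact iff_of_true le_rfl le_rfl
          | exact iff_of_true hw.le h.le
          | exact iff_of_false (not_le.mpr hw) (not_le.mpr h)

lemma not_superpattern_iff (w : Fin n → Fin 2) :
    ¬ Superpattern2 w ↔ (¬ Asc w ∨ ¬ Desc w) := by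
  rw [superpattern_iff]; tauto

/-- The exceptional words: `a+1` copies of `c`, then `1-c` up to position `n-2`,
and a final `c`. -/
def phi (n : ℕ) (c : Fin 2) (a : ℕ) : Fin n → Fin 2 :=
  fun i => if (i : ℕ) ≤ a then c else if (i : ℕ) < n - 1 then 1 - c else c

lemma phi_mem (hn : 3 ≤ n) {a : ℕ} (ha : a + 1 < n - 1) (c : Fin 2) :
    Superpattern2 (phi n c a) ∧
      ¬ Superpattern2 (fun i : Fin (n - 1) => phi n c a (Fin.castLE (Nat.sub_le n 1) i)) := by
  have hval : ∀ i : Fin (n - 1),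
      phi n c a (Fin.castLE (Nat.sub_le n 1) i) = if (i : ℕ) ≤ a then c else 1 - c := by
    intro i
    have hi : (i : ℕ) < n - 1 := i.isLt
    simp only [phi, Fin.coe_castLE]
    split_ifs <;> first | rfl | omega
  constructor
  · rw [superpattern_iff]
    rcases fin2_lt_or c with hc | hc
    · constructor
      · refine ⟨⟨0, by omega⟩, ⟨a + 1, by omega⟩, Fin.mk_lt_mk.mpr (by omega), ?_⟩
        simp only [phi, Fin.val_mk]
        rw [if_pos (by omega : (0:ℕ) ≤ a), if_neg (by omega : ¬ (a+1 ≤ a)),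
          if_pos (by omega : a + 1 < n - 1)]
        exact hc
      · refine ⟨⟨a + 1, by omega⟩, ⟨n - 1, by omega⟩, Fin.mk_lt_mk.mpr (by omega), ?_⟩
        simp only [phi, Fin.val_mk]
        rw [if_neg (by omega : ¬ (a+1 ≤ a)), if_pos (by omega : a + 1 < n - 1),
          if_neg (by omega : ¬ (n - 1 ≤ a)), if_neg (by omega : ¬ (n - 1 < n - 1))]
        exact hc
    · constructor
      · refine ⟨⟨a + 1, by omega⟩, ⟨n - 1, by omega⟩, Fin.mk_lt_mk.mpr (by omega), ?_⟩
        simp only [phi, Fin.val_mk]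
        rw [if_neg (by omega : ¬ (a+1 ≤ a)), if_pos (by omega : a + 1 < n - 1),
          if_neg (by omega : ¬ (n - 1 ≤ a)), if_neg (by omega : ¬ (n - 1 < n - 1))]
        exact hc
      · refine ⟨⟨0, by omega⟩, ⟨a + 1, by omega⟩, Fin.mk_lt_mk.mpr (by omega), ?_⟩
        simp only [phi, Fin.val_mk]
        rw [if_pos (by omega : (0:ℕ) ≤ a), if_neg (by omega : ¬ (a+1 ≤ a)),
          if_pos (by omega : a + 1 < n - 1)]
        exact hc
  · rw [not_superpattern_iff]
    rcases fin2_lt_or c with hc | hc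
    · right
      rintro ⟨i, j, hij, hw⟩
      have hij2 : (i : ℕ) < (j : ℕ) := hij
      simp only [hval] at hw
      split_ifs at hw with hA hB hB <;>
        first
          | exact absurd hw (lt_irrefl _)
          | exact absurd hw (lt_asymm hc)
          | omega
    · left
      rintro ⟨i, j, hij, hw⟩
      have hij2 : (i : ℕ) < (j : ℕ) := hij
      simp only [hval] at hw
      split_ifs at hw with hA hB hB <;>
        first
          | exact absurd hw (lt_irrefl _)
          | exact absurd hw (lt_asymm hc)
          | omega

lemma surj_aux (hn : 3 ≤ n) {w : Fin n → Fin 2} {c : Fin 2}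
    (hasc : Asc w) (hdesc : Desc w)
    (H : ∀ i j : Fin n, i < j → (j : ℕ) < n - 1 → ¬(w i = 1 - c ∧ w j = c)) :
    ∃ a : ℕ, a + 1 < n - 1 ∧ w = phi n c a := by
  classical
  have hdich : ∀ x : Fin 2, x = c ∨ x = 1 - c := fin2_dich c
  have hcne : c ≠ 1 - c := fin2_ne c
  -- a pair (k, l) with k < l, w k = 1 - c, w l = c
  have hpair : ∃ k l : Fin n, k < l ∧ w k = 1 - c ∧ w l = c := by
    rcases fin2_lt_or c with hc | hc
    · obtain ⟨hc0, hc1⟩ := fin2_lt hc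
      obtain ⟨k, l, hkl, hv⟩ := hdesc
      obtain ⟨h0, h1⟩ := fin2_lt hv
      exact ⟨k, l, hkl, by rw [h1, hc1], by rw [h0, hc0]⟩
    · obtain ⟨hc0, hc1⟩ := fin2_lt hc
      obtain ⟨k, l, hkl, hv⟩ := hasc
      exact ⟨k, l, hkl, by rw [(fin2_lt hv).1, hc0], by rw [(fin2_lt hv).2, hc1]⟩
  obtain ⟨k, l, hkl, hk1, hlc⟩ := hpair
  -- last letter is c
  have hlval : (l : ℕ) = n - 1 := by
    by_contra h
    have : (l : ℕ) < n - 1 := by have := l.isLt; omega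
    exact H k l hkl this ⟨hk1, hlc⟩
  have hlast : w ⟨n - 1, by omega⟩ = c := by
    have : (⟨n - 1, by omega⟩ : Fin n) = l := by apply Fin.ext; simp [hlval]
    rw [this]; exact hlc
  have hkval : (k : ℕ) < n - 1 := by
    have := hkl; rw [Fin.lt_def, hlval] at this; exact this
  -- some position < n-1 has value c
  have hattc : ∃ m : Fin n, (m : ℕ) < n - 1 ∧ w m = c := by
    rcases fin2_lt_or c with hc | hc
    · obtain ⟨hc0, hc1⟩ := fin2_lt hc
      obtain ⟨i, j, hij, hv⟩ := hasc
      obtain ⟨h0, h1⟩ := fin2_lt hv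
      exact ⟨i, by have := j.isLt; have := (Fin.lt_def.mp hij); omega, by rw [h0, hc0]⟩
    · obtain ⟨hc0, hc1⟩ := fin2_lt hc
      obtain ⟨i, j, hij, hv⟩ := hdesc
      obtain ⟨h0, h1⟩ := fin2_lt hv
      exact ⟨i, by have := j.isLt; have := (Fin.lt_def.mp hij); omega, by rw [h1, hc1]⟩
  -- first letter is c
  have hfirst : w ⟨0, by omega⟩ = c := by
    rcases hdich (w ⟨0, by omega⟩) with h | h
    · exact h
    · exfalso
      obtain ⟨m, hm, hmc⟩ := hattc
      have hm0 : (⟨0, by omega⟩ : Fin n) < m := by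
        rw [Fin.lt_def]
        rcases (Nat.eq_zero_or_pos (m : ℕ)).symm with hp | hz
        · exact hp
        · exfalso
          have : m = ⟨0, by omega⟩ := by apply Fin.ext; simp [hz]
          rw [this, h] at hmc
          exact hcne hmc.symm
      exact H _ m hm0 hm ⟨h, hmc⟩
  -- least position with value 1 - c
  have hex : ∃ m : ℕ, ∃ hm : m < n, m < n - 1 ∧ w ⟨m, hm⟩ = 1 - c := by
    refine ⟨(k : ℕ), k.isLt, hkval, ?_⟩
    have : (⟨(k : ℕ), k.isLt⟩ : Fin n) = k := Fin.ext rfl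
    rw [this]; exact hk1
  set t := Nat.find hex with ht
  obtain ⟨htn, htlt, htval⟩ := Nat.find_spec hex
  have hmin : ∀ m, m < t → ∀ hm : m < n, m < n - 1 → w ⟨m, hm⟩ = c := by
    intro m hmt hm hm1
    rcases hdich (w ⟨m, hm⟩) with h | h
    · exact h
    · exact absurd ⟨hm, hm1, h⟩ (Nat.find_min hex hmt)
  have ht1 : 1 ≤ t := by
    rcases (Nat.eq_zero_or_pos t).symm with h | h
    · exact h
    · exfalso
      have h0 : Nat.find hex = 0 := by omega
      have heq : (⟨Nat.find hex, htn⟩ : Fin n) = (⟨0, by omega⟩ : Fin n) :=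
        Fin.ext h0
      rw [heq] at htval
      exact hcne (hfirst.symm.trans htval)
  refine ⟨t - 1, by omega, ?_⟩
  funext i
  simp only [phi]
  split_ifs with hA hB
  · -- i ≤ t - 1, so i < t
    have hit : (i : ℕ) < t := by omega
    have : w ⟨(i : ℕ), i.isLt⟩ = c := hmin _ hit i.isLt (by omega)
    rwa [show (⟨(i : ℕ), i.isLt⟩ : Fin n) = i from Fin.ext rfl] at this
  · -- t ≤ i < n - 1
    have hti : t ≤ (i : ℕ) := by omega
    rcases eq_or_lt_of_le hti with h | h
    · have : (⟨t, htn⟩ : Fin n) = i := by apply Fin.ext; simp [h]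
      rw [← this]; exact htval
    · rcases hdich (w i) with hc | hc
      · exfalso
        refine H ⟨t, htn⟩ i ?_ hB ⟨htval, hc⟩
        rw [Fin.lt_def]; exact h
      · exact hc
  · have : (⟨n - 1, by omega⟩ : Fin n) = i := by
      apply Fin.ext; simp; omega
    rw [← this]; exact hlast

lemma phi_ne (hn : 3 ≤ n) {a b : ℕ} (ha : a + 1 < n - 1) (hb : b + 1 < n - 1)
    (hab : a < b) (c : Fin 2) : phi n c a ≠ phi n c b := by
  intro h
  have h2 := congrFun h ⟨a + 1, by omega⟩
  simp only [phi, Fin.val_mk] at h2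
  rw [if_neg (by omega), if_pos (by omega), if_pos (by omega)] at h2
  exact fin2_ne c h2.symm

end Aux

/-- For `n ≥ 3`, the number of binary words of length `n` that are superpatterns
(containing `11`, `12` and `21`) while their length-`(n-1)` prefix is not, equals
`2(n−2)`; consequently the waiting time `τ` for an i.i.d. uniform binary sequence
satisfies `P(τ = n) = (n−2)/2^(n−1)`. -/
theorem binary_strict_superpattern_count (n : ℕ) (hn : 3 ≤ n) :
    Nat.card {w : Fin n → Fin 2 //
      Superpattern2 w ∧
      ¬ Superpattern2 (fun i : Fin (n - 1) => w (Fin.castLE (Nat.sub_le n 1) i))} =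
      2 * (n - 2) ∧
    (Nat.card {w : Fin n → Fin 2 //
      Superpattern2 w ∧
      ¬ Superpattern2 (fun i : Fin (n - 1) => w (Fin.castLE (Nat.sub_le n 1) i))} : ℝ) /
      2 ^ n = ((n : ℝ) - 2) / 2 ^ (n - 1) := by
  classical
  set S := {w : Fin n → Fin 2 //
      Superpattern2 w ∧
      ¬ Superpattern2 (fun i : Fin (n - 1) => w (Fin.castLE (Nat.sub_le n 1) i))} with hS
  have hΦmem : ∀ x : Fin 2 × Fin (n - 2),
      Superpattern2 (phi n x.1 (x.2 : ℕ)) ∧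
      ¬ Superpattern2 (fun i : Fin (n - 1) =>
          phi n x.1 (x.2 : ℕ) (Fin.castLE (Nat.sub_le n 1) i)) := by
    intro x
    exact phi_mem hn (by have := x.2.isLt; omega) x.1
  set Φ : Fin 2 × Fin (n - 2) → S := fun x => ⟨phi n x.1 (x.2 : ℕ), hΦmem x⟩ with hΦ
  have hinj : Function.Injective Φ := by
    intro x y h
    have h' : phi n x.1 (x.2 : ℕ) = phi n y.1 (y.2 : ℕ) := congrArg Subtype.val h
    have hx2 : (x.2 : ℕ) + 1 < n - 1 := by have := x.2.isLt; omega
    have hy2 : (y.2 : ℕ) + 1 < n - 1 := by have := y.2.isLt; omega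
    have hc : x.1 = y.1 := by
      have h0 := congrFun h' ⟨0, by omega⟩
      simp only [phi, Fin.val_mk] at h0
      rwa [if_pos (Nat.zero_le _), if_pos (Nat.zero_le _)] at h0
    rw [hc] at h'
    refine Prod.ext hc (Fin.ext ?_)
    rcases lt_trichotomy (x.2 : ℕ) (y.2 : ℕ) with hlt | heq | hlt
    · exact absurd h' (phi_ne hn hx2 hy2 hlt y.1)
    · exact heq
    · exact absurd h'.symm (phi_ne hn hy2 hx2 hlt y.1)
  have hsurj : Function.Surjective Φ := by
    rintro ⟨w, hw1, hw2⟩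
    obtain ⟨hA, hD⟩ := (superpattern_iff w).mp hw1
    rw [not_superpattern_iff] at hw2
    have key : ∃ c : Fin 2, ∀ i j : Fin n, i < j → (j : ℕ) < n - 1 →
        ¬(w i = 1 - c ∧ w j = c) := by
      rcases hw2 with h | h
      · -- no ascent in the prefix: c = 1
        refine ⟨1, fun i j hij hj => ?_⟩
        rintro ⟨hwi, hwj⟩
        apply h
        refine ⟨⟨(i : ℕ), by have : (i:ℕ) < (j:ℕ) := hij; omega⟩, ⟨(j : ℕ), hj⟩,
          by rw [Fin.lt_def]; exact hij, ?_⟩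
        show w i < w j
        rw [hwi, hwj]
        decide
      · -- no descent in the prefix: c = 0
        refine ⟨0, fun i j hij hj => ?_⟩
        rintro ⟨hwi, hwj⟩
        apply h
        refine ⟨⟨(i : ℕ), by have : (i:ℕ) < (j:ℕ) := hij; omega⟩, ⟨(j : ℕ), hj⟩,
          by rw [Fin.lt_def]; exact hij, ?_⟩
        show w j < w i
        rw [hwi, hwj]
        decide
    obtain ⟨c, H⟩ := key
    obtain ⟨a, ha, hwa⟩ := surj_aux hn hA hD H
    exact ⟨(c, ⟨a, by omega⟩), Subtype.ext hwa.symm⟩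
  have hcard : Nat.card S = 2 * (n - 2) := by
    rw [← Nat.card_eq_of_bijective Φ ⟨hinj, hsurj⟩]
    simp [Nat.card_eq_fintype_card]
  refine ⟨hcard, ?_⟩
  rw [hcard]
  have h1 : ((2 * (n - 2) : ℕ) : ℝ) = 2 * ((n : ℝ) - 2) := by
    rw [Nat.cast_mul, Nat.cast_sub (by omega : 2 ≤ n)]
    norm_num
  have h2 : (2 : ℝ) ^ n = 2 ^ (n - 1) * 2 := by
    rw [← pow_succ]
    congr 1
    omega
  have h3 : (2 : ℝ) ^ (n - 1) ≠ 0 := by positivity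
  rw [h1, h2]
  field_simp
end

section
/- The expected waiting time until an i.i.d. uniform binary sequence contains all three preferential arrangements 11, 12, 21 as subsequences equals 5; that is, ∑_{n=3}^{∞} n(n−2)/2^{n−1} = 5. -/
/-- The expected waiting time until an i.i.d. uniform binary sequence contains
all three preferential arrangements `11, 12, 21` as subsequences equals 5. -/
theorem binary_waiting_time_expectation :
    ∑' n : ℕ, (if 3 ≤ n then (n : ℝ) * ((n : ℝ) - 2) / 2 ^ (n - 1) else 0) = 5 := by
  have h2 : HasSum (fun n : ℕ => ((n + 2).choose 2 : ℝ) * (1 / 2) ^ n)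
      (1 / (1 - 1 / 2) ^ 3) :=
    hasSum_choose_mul_geometric_of_norm_lt_one 2 (by norm_num)
  have h1 : HasSum (fun n : ℕ => ((n + 1).choose 1 : ℝ) * (1 / 2) ^ n)
      (1 / (1 - 1 / 2) ^ 2) :=
    hasSum_choose_mul_geometric_of_norm_lt_one 1 (by norm_num)
  have key := ((h2.mul_left 2).add h1).mul_left (1 / 4)
  have hg : HasSum (fun k : ℕ =>
      ((k : ℝ) + 3) * (((k : ℝ) + 3) - 2) / 2 ^ (k + 2)) 5 := by
    have hfun : (fun k : ℕ => (1 / 4 : ℝ) *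
        (2 * (((k + 2).choose 2 : ℝ) * (1 / 2) ^ k) +
          ((k + 1).choose 1 : ℝ) * (1 / 2) ^ k)) =
        fun k : ℕ => ((k : ℝ) + 3) * (((k : ℝ) + 3) - 2) / 2 ^ (k + 2) := by
      funext k
      have hc : (((k + 2).choose 2 : ℕ) : ℝ) = ((k : ℝ) + 2) * ((k : ℝ) + 1) / 2 := by
        rw [Nat.cast_choose_two]
        push_cast
        ring
      have h2k : (2 : ℝ) ^ k ≠ 0 := by positivity
      rw [hc, Nat.choose_one_right]
      push_cast
      rw [div_pow, one_pow]
      field_simp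
      ring
    have hval : (1 / 4 : ℝ) * (2 * (1 / (1 - 1 / 2) ^ 3) + 1 / (1 - 1 / 2) ^ 2) = 5 := by
      norm_num
    rw [← hval, ← hfun]
    exact key
  have hemb : Function.Injective (fun k : ℕ => k + 3) := add_left_injective 3
  have hf : HasSum (fun n : ℕ =>
      (if 3 ≤ n then (n : ℝ) * ((n : ℝ) - 2) / 2 ^ (n - 1) else 0)) 5 := by
    refine (hemb.hasSum_iff ?_).1 ?_
    · intro x hx
      have : ¬ 3 ≤ x := by
        intro h
        exact hx ⟨x - 3, show x - 3 + 3 = x by omega⟩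
      simp [this]
    · convert hg using 1
      funext k
      have h3 : 3 ≤ k + 3 := by omega
      simp only [Function.comp, if_pos h3]
      have : k + 3 - 1 = k + 2 := by omega
      rw [this]
      push_cast
      ring
  exact hf.tsum_eq
end
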